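/- arXiv:1504.07305 — 2 statements merged into one kernel-verified Lean document; each statement's English description precedes it below -/
import Mathlib

section
/- Let Y be a smooth projective geometrically integral variety over K. There is an exact sequence 0 → Br⁰(Y/K) → Br(Y/K) → P(Y)/I(Y) → 0, where the first map is inclusion and the second is induced by assigning to a_Y([D]) (for [D] ∈ Pic(Ȳ)^{G_K}) the image of [D] in NS(Ȳ) modulo I(Y). -/
open Polynomial
open scoped TensorProduct

/-- The Galois-descent (Hochschild–Serre) package attached to a smooth projective
geometrically integral variety `Y` over a field `K`: the geometric Picard group
`Pic(Ȳ)` together with its subgroup `Pic⁰(Ȳ)` of algebraically trivial classes,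
the subgroup of Galois-invariant classes `Pic(Ȳ)^{G_K}`, the subgroup of classes
of `K`-rational divisors `Pic(Y)`, and the connecting homomorphism
`a_Y : Pic(Ȳ)^{G_K} → Br(K)` of the exact Hochschild–Serre sequence
`0 → Pic(Y) → Pic(Ȳ)^{G_K} → Br(K) → Br(Y) → H¹(G_K, Pic(Ȳ))`. -/
structure GaloisDescentData (Br : Type) [AddCommGroup Br] : Type 1 where
  /-- the geometric Picard group `Pic(Ȳ)` -/
  Pic : Type
  [picAddCommGroup : AddCommGroup Pic]
  /-- the subgroup `Pic⁰(Ȳ)` of algebraically trivial classes -/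
  Pic0 : AddSubgroup Pic
  /-- the subgroup of Galois-invariant classes `Pic(Ȳ)^{G_K}` -/
  PicG : AddSubgroup Pic
  /-- the subgroup of classes of `K`-rational divisors, `Pic(Y) ⊆ Pic(Ȳ)^{G_K}` -/
  PicRat : AddSubgroup Pic
  picRat_le : PicRat ≤ PicG
  /-- the Hochschild–Serre connecting homomorphism `a_Y` -/
  a : PicG →+ Br
  /-- exactness of the Hochschild–Serre sequence at `Pic(Ȳ)^{G_K}`: `Pic(Y) = ker a_Y` -/
  a_eq_zero_iff : ∀ x : PicG, a x = 0 ↔ (x : Pic) ∈ PicRat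

attribute [instance] GaloisDescentData.picAddCommGroup

namespace GaloisDescentData

variable {Br : Type} [AddCommGroup Br] (D : GaloisDescentData Br)

/-- the Néron–Severi group `NS(Ȳ) = Pic(Ȳ)/Pic⁰(Ȳ)` -/
abbrev NS : Type := D.Pic ⧸ D.Pic0

/-- the projection `Pic(Ȳ) → NS(Ȳ)` -/
def toNS : D.Pic →+ D.NS := QuotientAddGroup.mk' D.Pic0

/-- the period subgroup `P(Y)`, the image of `Pic(Ȳ)^{G_K}` in `NS(Ȳ)` -/
def periodSubgroup : AddSubgroup D.NS := D.PicG.map D.toNS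

/-- the index subgroup `I(Y)`, the image of `Pic(Y)` in `NS(Ȳ)` -/
def indexSubgroup : AddSubgroup D.NS := D.PicRat.map D.toNS

/-- the relative Brauer group `Br(Y/K)`: by exactness of the Hochschild–Serre
sequence, the subgroup of `Br(K)` split by the function field `k(Y)` is exactly
the image of `a_Y`. -/
def relBr : AddSubgroup Br := D.a.range

/-- `Br⁰(Y/K)`, the image of `a_Y` restricted to `Pic⁰(Ȳ)^{G_K}` -/
def relBr0 : AddSubgroup Br := AddSubgroup.map D.a (D.Pic0.addSubgroupOf D.PicG)

/-- the quotient `P(Y)/I(Y)` of the period subgroup by the index subgroup -/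
abbrev PmodI : Type := D.periodSubgroup ⧸ (D.indexSubgroup.addSubgroupOf D.periodSubgroup)

/-- `a_Y x` as an element of `Br(Y/K)` -/
def aRel (x : D.PicG) : D.relBr := ⟨D.a x, AddMonoidHom.mem_range.mpr ⟨x, rfl⟩⟩

/-- the class in `P(Y)/I(Y)` of a Galois-invariant divisor class -/
def clsPmodI (x : D.PicG) : D.PmodI :=
  QuotientAddGroup.mk ⟨D.toNS x, AddSubgroup.mem_map.mpr ⟨(x : D.Pic), x.2, rfl⟩⟩

/-- `Pic⁰(Ȳ)^{G_K}`; for a torsor `Y` under an abelian variety `J` (or a curve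
with Jacobian `J`) this is the Mordell–Weil group `J(K)` of the Jacobian. -/
abbrev Pic0G : AddSubgroup D.Pic := D.Pic0 ⊓ D.PicG

/-- `Pic⁰(Y)`: the group of classes of `K`-rational divisors lying in `Pic⁰(Ȳ)` -/
abbrev Pic0Rat : AddSubgroup D.Pic := D.Pic0 ⊓ D.PicRat

end GaloisDescentData

/-- **exact sequence (2.5).** For a smooth projective
geometrically integral variety `Y` over `K` there is an exact sequence
`0 → Br⁰(Y/K) → Br(Y/K) → P(Y)/I(Y) → 0`, where the first map is the
inclusion and the second is induced by assigning to `a_Y([D])` (for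
`[D] ∈ Pic(Ȳ)^{G_K}`) the image of `[D]` in `NS(Ȳ)` modulo `I(Y)`. -/
theorem relBr0_relBr_PmodI_exact
    (K : Type) [Field K]
    (Br : Type) [AddCommGroup Br] (Y : GaloisDescentData Br) :
    ∃ g : Y.relBr →+ Y.PmodI,
      (∀ x : Y.PicG, g (Y.aRel x) = Y.clsPmodI x) ∧
      Function.Surjective g ∧
      ∀ b : Y.relBr, g b = 0 ↔ (b : Br) ∈ Y.relBr0 := by
  classical
  -- `h : PicG →+ PmodI`, sending `x` to its class.
  let h : Y.PicG →+ Y.PmodI :=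
    (QuotientAddGroup.mk' (Y.indexSubgroup.addSubgroupOf Y.periodSubgroup)).comp
      ((Y.toNS.comp Y.PicG.subtype).codRestrict Y.periodSubgroup
        (fun x => AddSubgroup.mem_map.mpr ⟨(x : Y.Pic), x.2, rfl⟩))
  have hcls : ∀ x : Y.PicG, h x = Y.clsPmodI x := fun x => rfl
  -- the corestriction `aRel' : PicG →+ relBr`
  let aRel' : Y.PicG →+ Y.relBr := Y.a.rangeRestrict
  have hsurj : Function.Surjective aRel' := Y.a.rangeRestrict_surjective
  -- kernel of `aRel'` is contained in kernel of `h`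
  have hker : ∀ x : Y.PicG, aRel' x = 0 → h x = 0 := by
    intro x hx
    have hx0 : Y.a x = 0 := by
      have h1 := congrArg Subtype.val hx
      exact h1
    have hxr : (x : Y.Pic) ∈ Y.PicRat := (Y.a_eq_zero_iff x).mp hx0
    show QuotientAddGroup.mk _ = 0
    rw [QuotientAddGroup.eq_zero_iff]
    exact AddSubgroup.mem_addSubgroupOf.mpr
      (AddSubgroup.mem_map.mpr ⟨(x : Y.Pic), hxr, rfl⟩)
  -- define `g` by choice of preimage
  have key : ∀ b : Y.relBr, ∃ p : Y.PmodI, ∀ x : Y.PicG, aRel' x = b → h x = p := by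
    intro b
    obtain ⟨x₀, hx₀⟩ := hsurj b
    refine ⟨h x₀, fun x hx => ?_⟩
    have h1 : aRel' (x - x₀) = 0 := by rw [map_sub, hx, hx₀, sub_self]
    have h2 := hker _ h1
    rw [map_sub] at h2
    rw [sub_eq_zero.mp h2]
  choose gfun hgfun using key
  have hgaRel : ∀ x : Y.PicG, gfun (aRel' x) = h x := fun x => (hgfun _ x rfl).symm
  let g : Y.relBr →+ Y.PmodI :=
    { toFun := gfun
      map_zero' := by
        have h1 := hgfun 0 0 (map_zero _)
        rw [← h1, map_zero]
      map_add' := by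
        intro b c
        show gfun (b + c) = gfun b + gfun c
        obtain ⟨x, hx⟩ := hsurj b
        obtain ⟨y, hy⟩ := hsurj c
        rw [← hx, ← hy, ← map_add, hgaRel, hgaRel, hgaRel, map_add] }
  refine ⟨g, fun x => ?_, ?_, ?_⟩
  · exact hgaRel x
  · -- surjectivity
    intro p
    obtain ⟨⟨n, hn⟩, rfl⟩ := QuotientAddGroup.mk_surjective p
    obtain ⟨z, hz, hzn⟩ := AddSubgroup.mem_map.mp hn
    refine ⟨aRel' ⟨z, hz⟩, ?_⟩
    show gfun _ = _
    rw [hgaRel]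
    show QuotientAddGroup.mk _ = QuotientAddGroup.mk _
    congr 1
    exact Subtype.ext hzn
  · -- kernel
    intro b
    obtain ⟨x, hx⟩ := hsurj b
    constructor
    · intro hb
      rw [← hx] at hb
      have hb1 : h x = 0 := by rw [← hgaRel x]; exact hb
      have hb' : _ ∈ Y.indexSubgroup.addSubgroupOf Y.periodSubgroup :=
        (QuotientAddGroup.eq_zero_iff _).mp hb1
      have hmem : Y.toNS (x : Y.Pic) ∈ Y.indexSubgroup :=
        AddSubgroup.mem_addSubgroupOf.mp hb'
      obtain ⟨r, hr, hrx⟩ := AddSubgroup.mem_map.mp hmem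
      have hrG : r ∈ Y.PicG := Y.picRat_le hr
      have hdiff : (x : Y.Pic) - r ∈ Y.Pic0 := by
        have h3 : Y.toNS ((x : Y.Pic) - r) = 0 := by rw [map_sub, hrx, sub_self]
        exact (QuotientAddGroup.eq_zero_iff _).mp h3
      refine AddSubgroup.mem_map.mpr ⟨x - ⟨r, hrG⟩, ?_, ?_⟩
      · exact AddSubgroup.mem_addSubgroupOf.mpr hdiff
      · have hr0 : Y.a ⟨r, hrG⟩ = 0 := (Y.a_eq_zero_iff _).mpr hr
        have hbx : Y.a x = (b : Br) := congrArg Subtype.val hx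
        rw [map_sub, hr0, sub_zero, hbx]
    · intro hb
      obtain ⟨z, hz, hzb⟩ := AddSubgroup.mem_map.mp hb
      have hz0 : (z : Y.Pic) ∈ Y.Pic0 := AddSubgroup.mem_addSubgroupOf.mp hz
      have hzb' : aRel' z = b := Subtype.ext hzb
      have hz1 : h z = 0 := by
        show QuotientAddGroup.mk _ = 0
        rw [QuotientAddGroup.eq_zero_iff]
        refine AddSubgroup.mem_addSubgroupOf.mpr ?_
        show Y.toNS (z : Y.Pic) ∈ Y.indexSubgroup
        have h4 : Y.toNS (z : Y.Pic) = 0 := (QuotientAddGroup.eq_zero_iff _).mpr hz0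
        rw [h4]
        exact zero_mem _
      rw [← hzb']
      exact (hgaRel z).trans hz1
end

section
/- Let φ : Y → Z be a morphism of smooth projective geometrically integral varieties over K. If D ∈ Div(Z̄) represents a class in Pic⁰(Z̄)^{G_K} and the pullback φ*D is a principal divisor on Ȳ, then D is linearly equivalent to a K-rational divisor on Z. -/
open Polynomial
open scoped TensorProduct

/-- The data of a morphism `φ : Y → Z` of smooth projective geometrically
integral varieties over `K`: the Galois-descent data of `Y` and `Z`, the
pullback `φ^* : Pic(Z̄) → Pic(Ȳ)` (preserving `Pic⁰`, Galois-invariance and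
`K`-rationality, and compatible with the connecting maps `a_Y`, `a_Z` via the
identity on `Br(K)`, as in diagram (2.6)), together with the group of
geometric divisors on `Z̄`, the divisor-class map, and the `K`-rational
divisors. -/
structure MorphismDescentData (K : Type) [Field K]
    (Br : Type) [AddCommGroup Br] : Type 1 where
  /-- the Galois-descent data of `Z` -/
  Z : GaloisDescentData Br
  /-- the Galois-descent data of `Y` -/
  Y : GaloisDescentData Br
  /-- the pullback `φ^*` on geometric Picard groups -/
  φPic : Z.Pic →+ Y.Pic
  φPic_Pic0 : ∀ x ∈ Z.Pic0, φPic x ∈ Y.Pic0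
  φPic_PicG : ∀ x, ∀ hx : x ∈ Z.PicG, φPic x ∈ Y.PicG
  φPic_PicRat : ∀ x ∈ Z.PicRat, φPic x ∈ Y.PicRat
  /-- compatibility of the connecting maps: `a_Y ∘ φ^* = a_Z` (diagram (2.6)) -/
  a_comp : ∀ x : Z.PicG, Y.a ⟨φPic x, φPic_PicG x x.2⟩ = Z.a x
  /-- the group of divisors `Div(Z̄)` -/
  DivZ : Type
  /-- the divisor-class map `Div(Z̄) → Pic(Z̄)` -/
  clsZ : DivZ → Z.Pic
  /-- `d ∈ Div(Z)`, i.e. `d` is a `K`-rational divisor -/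
  IsRat : DivZ → Prop
  /-- `Pic(Z)` consists exactly of the classes of `K`-rational divisors -/
  mem_picRat_iff : ∀ x : Z.Pic, x ∈ Z.PicRat ↔ ∃ d, IsRat d ∧ clsZ d = x

/-- **Lemma 2.6(2).** If `D ∈ Div(Z̄)` represents a class in
`Pic⁰(Z̄)^{G_K}` and `φ^*D` is principal (i.e. its class in `Pic(Ȳ)`
vanishes), then `D` is linearly equivalent to a `K`-rational divisor. -/
theorem pullback_principal_implies_rational
    (K : Type) [Field K]
    (Br : Type) [AddCommGroup Br] (T : MorphismDescentData K Br)
    (D : T.DivZ) (h0 : T.clsZ D ∈ T.Z.Pic0) (hG : T.clsZ D ∈ T.Z.PicG)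
    (hprin : T.φPic (T.clsZ D) = 0) :
    ∃ D' : T.DivZ, T.IsRat D' ∧ T.clsZ D' = T.clsZ D := by
  have h : T.Z.a ⟨T.clsZ D, hG⟩ = 0 := by
    rw [← T.a_comp ⟨T.clsZ D, hG⟩]
    have : (⟨T.φPic (T.clsZ D), T.φPic_PicG _ hG⟩ : T.Y.PicG) = 0 := by
      ext; exact hprin
    rw [this, map_zero]
  have := (T.Z.a_eq_zero_iff _).mp h
  exact (T.mem_picRat_iff _).mp this
end
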